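/- In a finite two-player zero-sum sequential game of perfect information whose realizations are partitioned into sets R_w (White wins), R_b (Black wins), and R_wb (draws), either White has a winning strategy or Black has a non-losing strategy. -/

import Mathlib

/-- Possible outcomes of a realization (complete play) of the game. -/
inductive Outcome where
  | whiteWins  -- realization lies in R_w
  | blackWins  -- realization lies in R_b
  | draw       -- realization lies in R_wb

/-- White has a winning strategy for the remaining `k` pairs of moves after
history `hist`: there is a White move such that for every Black reply, etc.,
the resulting realization lies in `R_w`. -/
def WhiteWinsFrom {Move : Type} (outcome : List Move → Outcome) :
    ℕ → List Move → Prop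
  | 0, hist => outcome hist = Outcome.whiteWins
  | k + 1, hist => ∃ w : Move, ∀ b : Move,
      WhiteWinsFrom outcome k (hist ++ [w, b])

/-- Black has a non-losing strategy for the remaining `k` pairs of moves after
history `hist`: for every White move there is a Black reply, etc., such that
the resulting realization lies in `R_b ∪ R_wb`. -/
def BlackNonLosesFrom {Move : Type} (outcome : List Move → Outcome) :
    ℕ → List Move → Prop
  | 0, hist => outcome hist = Outcome.blackWins ∨ outcome hist = Outcome.draw
  | k + 1, hist => ∀ w : Move, ∃ b : Move,
      BlackNonLosesFrom outcome k (hist ++ [w, b])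

/- Zermelo's determinacy by backward induction: each round of Black's condition `∀ w, ∃ b` is
the De Morgan dual of White's `∃ w, ∀ b`, and at the end of play the three outcomes are
exhaustive and exclusive. -/
theorem blackNonLosesFrom_iff_not_whiteWinsFrom {Move : Type} (outcome : List Move → Outcome)
    (k : ℕ) (hist : List Move) :
    BlackNonLosesFrom outcome k hist ↔ ¬WhiteWinsFrom outcome k hist := by
  induction k generalizing hist with
  | zero => cases h : outcome hist <;> simp [BlackNonLosesFrom, WhiteWinsFrom, h]
  | succ k ih => simp only [BlackNonLosesFrom, WhiteWinsFrom, ih, not_exists, not_forall]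

theorem white_wins_or_black_non_loses_general
    {Move : Type}
    (n : ℕ) (outcome : List Move → Outcome) :
    WhiteWinsFrom outcome n [] ∨ BlackNonLosesFrom outcome n [] :=
  or_iff_not_imp_left.mpr (blackNonLosesFrom_iff_not_whiteWinsFrom outcome n []).mpr

/-- In a finite two-player zero-sum sequential game of perfect information
(finitely many moves, `n` rounds), with realizations partitioned into
`R_w`, `R_b`, `R_wb` by `outcome`, either White has a winning strategy or
Black has a non-losing strategy. -/
theorem white_wins_or_black_non_loses
    {Move : Type} [Fintype Move] [Nonempty Move]
    (n : ℕ) (outcome : List Move → Outcome) :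
    WhiteWinsFrom outcome n [] ∨ BlackNonLosesFrom outcome n [] :=
  white_wins_or_black_non_loses_general n outcome
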